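/- arXiv:1206.4517 — 5 statements merged into one kernel-verified Lean document; each statement's English description precedes it below -/
import Mathlib

section
/- Let P be a finite set of points and L a finite set of lines in a plane, and set λ = max{4, 4|L|²/I(P,L)} (assuming I(P,L) > 0). If P₁ is the set of points in P incident to at most λ lines of L, then I(P₁,L) ≥ I(P,L)/2. -/
open scoped Classical

/-- A line in the plane `F × F`. -/
def IsLine {F : Type*} [Field F] (l : Set (F × F)) : Prop :=
  ∃ a b c : F, (a ≠ 0 ∨ b ≠ 0) ∧ l = {p : F × F | a * p.1 + b * p.2 = c}

/-- The number of incidences between a finite set of points and a finite set of lines. -/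
noncomputable def nInc {F : Type*} [Field F] (P : Finset (F × F))
    (L : Finset (Set (F × F))) : ℕ :=
  ∑ p ∈ P, (L.filter fun l => p ∈ l).card

/-!
Write `d p` for the number of lines through `p`. Two distinct lines meet in at most one point, so
counting ordered pairs of distinct lines through a common point gives `∑ p, d p (d p - 1) ≤ |L|²`.
A point with `d p > λ ≥ 2` has `d p (d p - 1) ≥ (λ / 2) d p`, so the points outside `P₁` carry at
most `2 |L|² / λ ≤ I(P, L) / 2` incidences.
-/

open Finset

section Lines

variable {F : Type*} [Field F]

theorem IsLine.eq_setOf_of_mem {l : Set (F × F)} (hl : IsLine l) {p q : F × F}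
    (hp : p ∈ l) (hq : q ∈ l) (hpq : p ≠ q) :
    l = {x | (x.1 - p.1) * (q.2 - p.2) = (x.2 - p.2) * (q.1 - p.1)} := by
  obtain ⟨a, b, c, hab, rfl⟩ := hl
  simp only [Set.mem_ofPred_eq] at hp hq
  have hu : q.1 - p.1 ≠ 0 ∨ q.2 - p.2 ≠ 0 := by
    by_contra! h
    exact hpq (Prod.ext (sub_eq_zero.mp h.1).symm (sub_eq_zero.mp h.2).symm)
  ext x
  simp only [Set.mem_ofPred_eq]
  constructor
  · intro hx
    rcases hab with ha | hb
    · refine mul_left_cancel₀ ha ?_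
      linear_combination (q.2 - p.2) * (hx - hp) - (x.2 - p.2) * (hq - hp)
    · refine mul_left_cancel₀ hb ?_
      linear_combination (x.1 - p.1) * (hq - hp) - (q.1 - p.1) * (hx - hp)
  · intro hx
    rcases hu with hu | hu
    · refine mul_left_cancel₀ hu ?_
      linear_combination (x.1 - p.1) * (hq - hp) - b * hx + (q.1 - p.1) * hp
    · refine mul_left_cancel₀ hu ?_
      linear_combination (x.2 - p.2) * (hq - hp) + a * hx + (q.2 - p.2) * hp

theorem IsLine.inter_subsingleton {l₁ l₂ : Set (F × F)} (h₁ : IsLine l₁) (h₂ : IsLine l₂)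
    (hne : l₁ ≠ l₂) : (l₁ ∩ l₂).Subsingleton := by
  intro p hp q hq
  by_contra hpq
  exact hne <| (h₁.eq_setOf_of_mem hp.1 hq.1 hpq).trans (h₂.eq_setOf_of_mem hp.2 hq.2 hpq).symm

end Lines

section Incidences

variable {α : Type*} (P : Finset α) (L : Finset (Set α))

theorem sum_card_offDiag_filter_mem_le
    (hL : ∀ l₁ ∈ L, ∀ l₂ ∈ L, l₁ ≠ l₂ → (l₁ ∩ l₂).Subsingleton) :
    ∑ p ∈ P, #(L.filter fun l => p ∈ l).offDiag ≤ #L.offDiag := by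
  have hfilter : ∀ p, (L.filter fun l => p ∈ l).offDiag
      = L.offDiag.filter fun ll => p ∈ ll.1 ∧ p ∈ ll.2 := by
    intro p
    ext ll
    simp only [mem_offDiag, mem_filter]
    tauto
  calc ∑ p ∈ P, #(L.filter fun l => p ∈ l).offDiag
      = ∑ ll ∈ L.offDiag, #(P.filter fun p => p ∈ ll.1 ∧ p ∈ ll.2) := by
        simp only [hfilter, card_filter]
        exact sum_comm
    _ ≤ ∑ _ll ∈ L.offDiag, 1 := by
        refine sum_le_sum fun ll hll => card_le_one.mpr fun p hp q hq => ?_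
        rw [mem_offDiag] at hll
        rw [mem_filter] at hp hq
        exact hL _ hll.1 _ hll.2.1 hll.2.2 hp.2 hq.2
    _ = #L.offDiag := by rw [card_eq_sum_ones]

theorem mul_sum_card_filter_mem_le_two_mul_card_offDiag
    (hL : ∀ l₁ ∈ L, ∀ l₂ ∈ L, l₁ ≠ l₂ → (l₁ ∩ l₂).Subsingleton) {lam : ℝ} (hlam : 2 ≤ lam) :
    lam * ∑ p ∈ P.filter (fun p => lam < #(L.filter fun l => p ∈ l)),
      (#(L.filter fun l => p ∈ l) : ℝ) ≤ 2 * #L.offDiag := by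
  have hpoint : ∀ d : ℕ, lam < d → lam * d ≤ 2 * ((d * d - d : ℕ) : ℝ) := by
    intro d hd
    rw [Nat.cast_sub (Nat.le_mul_self d)]
    push_cast
    nlinarith
  calc lam * ∑ p ∈ P.filter (fun p => lam < #(L.filter fun l => p ∈ l)),
        (#(L.filter fun l => p ∈ l) : ℝ)
      ≤ 2 * ∑ p ∈ P.filter (fun p => lam < #(L.filter fun l => p ∈ l)),
        ((#(L.filter fun l => p ∈ l).offDiag : ℕ) : ℝ) := by
        simp only [mul_sum, offDiag_card]
        exact sum_le_sum fun p hp => hpoint _ (mem_filter.mp hp).2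
    _ ≤ 2 * ∑ p ∈ P, ((#(L.filter fun l => p ∈ l).offDiag : ℕ) : ℝ) := by
        gcongr
        exact filter_subset _ _
    _ ≤ 2 * #L.offDiag := by
        gcongr
        exact_mod_cast sum_card_offDiag_filter_mem_le P L hL

end Incidences

theorem stmt2_general {F : Type*} [Field F] (P : Finset (F × F)) (L : Finset (Set (F × F)))
    (hL : ∀ l ∈ L, IsLine l)
    (lam : ℝ) (hlam : lam = max 4 (4 * (L.card : ℝ) ^ 2 / (nInc P L : ℝ)))
    (P₁ : Finset (F × F))
    (hP₁ : P₁ = P.filter fun p => ((L.filter fun l => p ∈ l).card : ℝ) ≤ lam) :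
    (nInc P L : ℝ) / 2 ≤ (nInc P₁ L : ℝ) := by
  set S := ∑ p ∈ P.filter (fun p => lam < #(L.filter fun l => p ∈ l)),
    (#(L.filter fun l => p ∈ l) : ℝ)
  have hsplit : (nInc P L : ℝ) = nInc P₁ L + S := by
    simp only [hP₁, nInc, S, Nat.cast_sum, ← not_le]
    exact (sum_filter_add_sum_filter_not _ _ _).symm
  have hlam4 : 4 ≤ lam := hlam ▸ le_max_left _ _
  have hrich : lam * S ≤ 2 * (#L : ℝ) ^ 2 := by
    refine (mul_sum_card_filter_mem_le_two_mul_card_offDiag P L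
      (fun l₁ h₁ l₂ h₂ => (hL l₁ h₁).inter_subsingleton (hL l₂ h₂)) (by linarith)).trans ?_
    rw [offDiag_card]
    gcongr
    exact_mod_cast (Nat.sub_le _ _).trans (sq #L).ge
  have hS : 2 * S ≤ nInc P L := by
    rcases (Nat.zero_le (nInc P L)).eq_or_lt with hI | hI
    · have hI' : (nInc P L : ℝ) = 0 := by exact_mod_cast hI.symm
      have : 0 ≤ S := sum_nonneg fun _ _ => Nat.cast_nonneg _
      linarith [(Nat.cast_nonneg (nInc P₁ L) : (0 : ℝ) ≤ _)]
    · have hI' : (0 : ℝ) < nInc P L := by exact_mod_cast hI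
      have : 4 * (#L : ℝ) ^ 2 ≤ lam * nInc P L := by
        have := hlam ▸ le_max_right (4 : ℝ) (4 * (#L : ℝ) ^ 2 / nInc P L)
        rwa [div_le_iff₀ hI'] at this
      nlinarith
  linarith [(Nat.cast_nonneg (nInc P₁ L) : (0 : ℝ) ≤ _)]

theorem stmt2 {F : Type*} [Field F] (P : Finset (F × F)) (L : Finset (Set (F × F)))
    (hL : ∀ l ∈ L, IsLine l) (hI : 0 < nInc P L)
    (lam : ℝ) (hlam : lam = max 4 (4 * (L.card : ℝ) ^ 2 / (nInc P L : ℝ)))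
    (P₁ : Finset (F × F))
    (hP₁ : P₁ = P.filter fun p => ((L.filter fun l => p ∈ l).card : ℝ) ≤ lam) :
    (nInc P L : ℝ) / 2 ≤ (nInc P₁ L : ℝ) :=
  stmt2_general P L hL lam hlam P₁ hP₁
end

section
/- Let P be a finite set of points and L a finite set of lines in a plane, and set λ = max{4, 4|P|²/I(P,L)} (assuming I(P,L) > 0). If L₁ is the set of lines in L incident to at most λ points of P, then I(P,L₁) ≥ I(P,L)/2. -/
open scoped Classical

lemma line_char {F : Type*} [Field F] {l : Set (F × F)} (hl : IsLine l) {p q : F × F}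
    (hp : p ∈ l) (hq : q ∈ l) (hpq : p ≠ q) :
    l = {x : F × F | (q.1 - p.1) * (x.2 - p.2) = (q.2 - p.2) * (x.1 - p.1)} := by
  obtain ⟨a, b, c, hab, rfl⟩ := hl
  simp only [Set.mem_setOf_eq] at hp hq
  have hd : a * (q.1 - p.1) + b * (q.2 - p.2) = 0 := by linear_combination hq - hp
  ext x
  simp only [Set.mem_setOf_eq]
  constructor
  · intro hx
    have hx' : a * (x.1 - p.1) + b * (x.2 - p.2) = 0 := by linear_combination hx - hp
    rcases hab with ha | hb
    · apply mul_left_cancel₀ ha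
      linear_combination (x.2 - p.2) * hd - (q.2 - p.2) * hx'
    · apply mul_left_cancel₀ hb
      linear_combination (q.1 - p.1) * hx' - (x.1 - p.1) * hd
  · intro hx
    have hd1 : q.1 - p.1 ≠ 0 ∨ q.2 - p.2 ≠ 0 := by
      by_contra h
      push_neg at h
      exact hpq (Prod.ext (sub_eq_zero.mp h.1).symm (sub_eq_zero.mp h.2).symm)
    have key : a * (x.1 - p.1) + b * (x.2 - p.2) = 0 := by
      rcases hd1 with h1 | h2
      · apply mul_left_cancel₀ h1
        linear_combination (x.1 - p.1) * hd + b * hx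
      · apply mul_left_cancel₀ h2
        linear_combination (x.2 - p.2) * hd - a * hx
    linear_combination key + hp

lemma line_unique {F : Type*} [Field F] {l l' : Set (F × F)} (hl : IsLine l)
    (hl' : IsLine l') {p q : F × F} (hp : p ∈ l) (hq : q ∈ l) (hp' : p ∈ l')
    (hq' : q ∈ l') (hpq : p ≠ q) : l = l' := by
  rw [line_char hl hp hq hpq, line_char hl' hp' hq' hpq]

lemma double_count {F : Type*} [Field F] (P : Finset (F × F)) (L : Finset (Set (F × F))) :
    nInc P L = ∑ l ∈ L, (P.filter fun p => p ∈ l).card := by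
  unfold nInc
  simp only [Finset.card_filter]
  exact Finset.sum_comm

lemma pairs_bound {F : Type*} [Field F] (P : Finset (F × F)) (L : Finset (Set (F × F)))
    (hL : ∀ l ∈ L, IsLine l) :
    ∑ l ∈ L, ((P.filter fun p => p ∈ l).offDiag).card ≤ P.card * P.card := by
  have hdisj : (L : Set (Set (F × F))).PairwiseDisjoint
      (fun l => (P.filter fun p => p ∈ l).offDiag) := by
    intro l hl l' hl' hne
    simp only [Finset.disjoint_left]
    intro pq hpq hpq'
    simp only [Finset.mem_offDiag, Finset.mem_filter] at hpq hpq'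
    exact hne (line_unique (hL l hl) (hL l' hl') hpq.1.2 hpq.2.1.2 hpq'.1.2 hpq'.2.1.2
      hpq.2.2)
  rw [← Finset.card_biUnion hdisj]
  calc (L.biUnion fun l => (P.filter fun p => p ∈ l).offDiag).card
      ≤ (P ×ˢ P).card := by
        apply Finset.card_le_card
        intro pq hpq
        simp only [Finset.mem_biUnion, Finset.mem_offDiag, Finset.mem_filter] at hpq
        obtain ⟨l, _, h1, h2, _⟩ := hpq
        exact Finset.mem_product.mpr ⟨h1.1, h2.1⟩
    _ = P.card * P.card := by rw [Finset.card_product]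

theorem stmt3 {F : Type*} [Field F] (P : Finset (F × F)) (L : Finset (Set (F × F)))
    (hL : ∀ l ∈ L, IsLine l) (hI : 0 < nInc P L)
    (lam : ℝ) (hlam : lam = max 4 (4 * (P.card : ℝ) ^ 2 / (nInc P L : ℝ)))
    (L₁ : Finset (Set (F × F)))
    (hL₁ : L₁ = L.filter fun l => ((P.filter fun p => p ∈ l).card : ℝ) ≤ lam) :
    (nInc P L : ℝ) / 2 ≤ (nInc P L₁ : ℝ) := by
  set n : Set (F × F) → ℕ := fun l => (P.filter fun p => p ∈ l).card with hn
  set L₂ : Finset (Set (F × F)) := L.filter fun l => ¬ ((n l : ℝ) ≤ lam) with hL₂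
  have hlam4 : (4 : ℝ) ≤ lam := by rw [hlam]; exact le_max_left _ _
  have hlampos : 0 < lam := by linarith
  have hlamI : 4 * (P.card : ℝ) ^ 2 ≤ lam * (nInc P L : ℝ) := by
    have h1 : 4 * (P.card : ℝ) ^ 2 / (nInc P L : ℝ) ≤ lam := by
      rw [hlam]; exact le_max_right _ _
    have hIpos : (0 : ℝ) < (nInc P L : ℝ) := by exact_mod_cast hI
    calc 4 * (P.card : ℝ) ^ 2 = 4 * (P.card : ℝ) ^ 2 / (nInc P L : ℝ) * (nInc P L : ℝ) := by
          field_simp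
      _ ≤ lam * (nInc P L : ℝ) := by
          exact mul_le_mul_of_nonneg_right h1 hIpos.le
  -- split incidences
  have hsplit : nInc P L = nInc P L₁ + nInc P L₂ := by
    rw [double_count, double_count, double_count, hL₁, hL₂]
    exact (Finset.sum_filter_add_sum_filter_not L _ _).symm
  -- bound on heavy lines
  have hheavy : (nInc P L₂ : ℝ) * (lam / 2) ≤ (P.card : ℝ) * (P.card : ℝ) := by
    have hoff : ∀ l ∈ L₂, ((P.filter fun p => p ∈ l).offDiag).card
        = n l * n l - n l := by
      intro l _
      rw [Finset.offDiag_card]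
    have hub : ∑ l ∈ L₂, (n l * n l - n l) ≤ P.card * P.card := by
      calc ∑ l ∈ L₂, (n l * n l - n l)
          = ∑ l ∈ L₂, ((P.filter fun p => p ∈ l).offDiag).card :=
            (Finset.sum_congr rfl hoff).symm
        _ ≤ ∑ l ∈ L, ((P.filter fun p => p ∈ l).offDiag).card := by
            apply Finset.sum_le_sum_of_subset
            rw [hL₂]; exact Finset.filter_subset _ _
        _ ≤ P.card * P.card := pairs_bound P L hL
    have hpos : ∀ l ∈ L₂, 1 ≤ n l := by
      intro l hl
      simp only [hL₂, Finset.mem_filter, not_le] at hl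
      by_contra h0
      push_neg at h0
      interval_cases h : n l
      norm_num at hl
      linarith [hl.2, hlam4]
    have hubR : (∑ l ∈ L₂, ((n l : ℝ) * (n l : ℝ) - (n l : ℝ)))
        ≤ (P.card : ℝ) * (P.card : ℝ) := by
      calc ∑ l ∈ L₂, ((n l : ℝ) * (n l : ℝ) - (n l : ℝ))
          = ∑ l ∈ L₂, ((n l * n l - n l : ℕ) : ℝ) := by
            apply Finset.sum_congr rfl
            intro l hl
            rw [Nat.cast_sub (Nat.le_mul_of_pos_left _ (hpos l hl)), Nat.cast_mul]
        _ ≤ (P.card : ℝ) * (P.card : ℝ) := by exact_mod_cast hub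
    have hterm : ∀ l ∈ L₂, (n l : ℝ) * (lam / 2) ≤ (n l : ℝ) * (n l : ℝ) - (n l : ℝ) := by
      intro l hl
      simp only [hL₂, Finset.mem_filter, not_le] at hl
      have h1 : lam < (n l : ℝ) := hl.2
      nlinarith
    calc (nInc P L₂ : ℝ) * (lam / 2)
        = ∑ l ∈ L₂, (n l : ℝ) * (lam / 2) := by
          rw [double_count, ← Finset.sum_mul, Nat.cast_sum]
      _ ≤ ∑ l ∈ L₂, ((n l : ℝ) * (n l : ℝ) - (n l : ℝ)) := Finset.sum_le_sum hterm
      _ ≤ (P.card : ℝ) * (P.card : ℝ) := hubR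
  -- conclude: nInc P L₂ ≤ I / 2
  have h2 : (nInc P L₂ : ℝ) ≤ (nInc P L : ℝ) / 2 := by
    have := hheavy
    have hlamI' : 4 * ((P.card : ℝ) * (P.card : ℝ)) ≤ lam * (nInc P L : ℝ) := by
      nlinarith [hlamI]
    nlinarith [hlampos]
  have hsplitR : (nInc P L : ℝ) = (nInc P L₁ : ℝ) + (nInc P L₂ : ℝ) := by
    exact_mod_cast congrArg (Nat.cast : ℕ → ℝ) hsplit
  linarith
end

section
/- Let A, B be finite sets and G ⊆ A × B nonempty, and let 0 < ε < 1. Define N(a) = {b ∈ B : (a,b) ∈ G}. Then there exists A' ⊆ A with |A'| ≥ c_ε |G|/|B| such that for at least (1−ε)|A'|² of the pairs (a₁,a₂) ∈ A' × A' one has |N(a₁) ∩ N(a₂)| ≥ c |G|²/(|A|²|B|), where c, c_ε > 0 are constants (c_ε depending only on ε). -/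
set_option maxHeartbeats 1000000

open scoped Classical

theorem stmt8 (ε : ℝ) (hε : 0 < ε) (hε1 : ε < 1) :
    ∃ c cε : ℝ, 0 < c ∧ 0 < cε ∧
      ∀ (α β : Type) [DecidableEq α] [DecidableEq β],
        ∀ (A : Finset α) (B : Finset β) (G : Finset (α × β)),
          G ⊆ A ×ˢ B → G.Nonempty →
          ∃ A' ⊆ A, cε * (G.card : ℝ) / (B.card : ℝ) ≤ (A'.card : ℝ) ∧
            (1 - ε) * (A'.card : ℝ) ^ 2 ≤
              (((A' ×ˢ A').filter fun q =>
                c * (G.card : ℝ) ^ 2 / ((A.card : ℝ) ^ 2 * (B.card : ℝ)) ≤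
                  ((B.filter fun b => (q.1, b) ∈ G ∧ (q.2, b) ∈ G).card : ℝ)).card : ℝ) := by
  refine ⟨ε / 2, 1 / 2, by positivity, by norm_num, ?_⟩
  intro α β _ _ A B G hGAB hG
  obtain ⟨p0, hp0⟩ := hG
  have hp0' := hGAB hp0
  rw [Finset.mem_product] at hp0'
  have hA : A.Nonempty := ⟨p0.1, hp0'.1⟩
  have hB : B.Nonempty := ⟨p0.2, hp0'.2⟩
  have hAc : (0:ℝ) < A.card := by exact_mod_cast Finset.card_pos.2 hA
  have hBc : (0:ℝ) < B.card := by exact_mod_cast Finset.card_pos.2 hB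
  have he : (0:ℝ) < G.card := by exact_mod_cast Finset.card_pos.2 ⟨p0, hp0⟩
  set t : ℝ := ε / 2 * (G.card : ℝ) ^ 2 / ((A.card : ℝ) ^ 2 * (B.card : ℝ)) with htdef
  have ht : 0 ≤ t := by positivity
  set P : α × α → Prop := fun q =>
    t ≤ ((B.filter fun b => (q.1, b) ∈ G ∧ (q.2, b) ∈ G).card : ℝ) with hPdef
  set F : β → Finset α := fun b => A.filter fun a => (a, b) ∈ G with hFdef
  -- double counting degrees
  have S1 : ∑ b ∈ B, (F b).card = G.card := by
    rw [Finset.card_eq_sum_card_fiberwise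
      (f := Prod.snd) (t := B) (fun p hp => (Finset.mem_product.1 (hGAB hp)).2)]
    refine Finset.sum_congr rfl fun b hb => ?_
    refine Finset.card_bij' (fun a _ => (a, b)) (fun p _ => p.1) ?_ ?_ ?_ ?_
    · intro a ha
      simp only [hFdef, Finset.mem_filter] at ha
      exact Finset.mem_filter.2 ⟨ha.2, rfl⟩
    · intro p hp
      simp only [Finset.mem_filter] at hp
      obtain ⟨hpG, hps⟩ := hp
      have hpe : (p.1, b) = p := by rw [← hps]
      refine Finset.mem_filter.2 ⟨(Finset.mem_product.1 (hGAB hpG)).1, ?_⟩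
      rw [hpe]; exact hpG
    · intro a ha
      rfl
    · intro p hp
      simp only [Finset.mem_filter] at hp
      exact Prod.ext rfl hp.2.symm
  -- double counting bad pairs
  have S2 : ∑ b ∈ B,
      ((A ×ˢ A).filter fun q => ¬ P q ∧ (q.1, b) ∈ G ∧ (q.2, b) ∈ G).card
      = ∑ q ∈ (A ×ˢ A).filter fun q => ¬ P q,
          (B.filter fun b => (q.1, b) ∈ G ∧ (q.2, b) ∈ G).card := by
    simp_rw [Finset.card_filter, Finset.sum_filter]
    rw [Finset.sum_comm]
    refine Finset.sum_congr rfl fun q hq => ?_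
    by_cases h : P q
    · simp [h]
    · simp [h]
  -- bound on sum of bad pair counts
  have hBadCard : (((A ×ˢ A).filter fun q => ¬ P q).card : ℝ) ≤ (A.card : ℝ) ^ 2 := by
    have h1 := Finset.card_filter_le (A ×ˢ A) (fun q => ¬ P q)
    have h2 : (A ×ˢ A).card = A.card * A.card := Finset.card_product A A
    have := h1.trans_eq h2
    push_cast
    calc (((A ×ˢ A).filter fun q => ¬ P q).card : ℝ) ≤ (A.card : ℝ) * A.card := by
          exact_mod_cast this
      _ = (A.card : ℝ) ^ 2 := by ring
  have hBadSum : (∑ b ∈ B,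
      (((A ×ˢ A).filter fun q => ¬ P q ∧ (q.1, b) ∈ G ∧ (q.2, b) ∈ G).card : ℝ))
      ≤ ε / 2 * (G.card : ℝ) ^ 2 / (B.card : ℝ) := by
    have S2' : (∑ b ∈ B,
        (((A ×ˢ A).filter fun q => ¬ P q ∧ (q.1, b) ∈ G ∧ (q.2, b) ∈ G).card : ℝ))
        = ∑ q ∈ (A ×ˢ A).filter fun q => ¬ P q,
            ((B.filter fun b => (q.1, b) ∈ G ∧ (q.2, b) ∈ G).card : ℝ) := by
      exact_mod_cast S2
    rw [S2']
    calc (∑ q ∈ (A ×ˢ A).filter fun q => ¬ P q,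
          ((B.filter fun b => (q.1, b) ∈ G ∧ (q.2, b) ∈ G).card : ℝ))
        ≤ ∑ q ∈ (A ×ˢ A).filter fun q => ¬ P q, t := by
          refine Finset.sum_le_sum fun q hq => ?_
          have := (Finset.mem_filter.1 hq).2
          exact le_of_not_ge this
      _ = (((A ×ˢ A).filter fun q => ¬ P q).card : ℝ) * t := by
          rw [Finset.sum_const, nsmul_eq_mul]
      _ ≤ (A.card : ℝ) ^ 2 * t := mul_le_mul_of_nonneg_right hBadCard ht
      _ = ε / 2 * (G.card : ℝ) ^ 2 / (B.card : ℝ) := by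
          rw [htdef]; field_simp
  -- Cauchy-Schwarz
  have hCS : (G.card : ℝ) ^ 2 ≤ (B.card : ℝ) * ∑ b ∈ B, ((F b).card : ℝ) ^ 2 := by
    have := sq_sum_le_card_mul_sum_sq (s := B) (f := fun b => ((F b).card : ℝ))
    calc (G.card : ℝ) ^ 2 = (∑ b ∈ B, ((F b).card : ℝ)) ^ 2 := by
          rw [← S1]; push_cast; ring
      _ ≤ (B.card : ℝ) * ∑ b ∈ B, ((F b).card : ℝ) ^ 2 := by exact_mod_cast this
  -- find good b
  have hsum : ∑ b ∈ B, ((G.card : ℝ) ^ 2 / (2 * (B.card : ℝ) ^ 2))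
      ≤ ∑ b ∈ B, (((F b).card : ℝ) ^ 2
        - (((A ×ˢ A).filter fun q => ¬ P q ∧ (q.1, b) ∈ G ∧ (q.2, b) ∈ G).card : ℝ) / ε) := by
    rw [Finset.sum_const, nsmul_eq_mul, Finset.sum_sub_distrib, ← Finset.sum_div]
    have h1 : (G.card : ℝ) ^ 2 / (B.card : ℝ) ≤ ∑ b ∈ B, ((F b).card : ℝ) ^ 2 := by
      rw [div_le_iff₀ hBc]; linarith [hCS]
    have h2 : (∑ b ∈ B,
        (((A ×ˢ A).filter fun q => ¬ P q ∧ (q.1, b) ∈ G ∧ (q.2, b) ∈ G).card : ℝ)) / ε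
        ≤ (G.card : ℝ) ^ 2 / (2 * (B.card : ℝ)) := by
      rw [div_le_iff₀ hε]
      calc _ ≤ ε / 2 * (G.card : ℝ) ^ 2 / (B.card : ℝ) := hBadSum
        _ = (G.card : ℝ) ^ 2 / (2 * (B.card : ℝ)) * ε := by field_simp
    have h3 : (B.card : ℝ) * ((G.card : ℝ) ^ 2 / (2 * (B.card : ℝ) ^ 2))
        = (G.card : ℝ) ^ 2 / (B.card : ℝ) - (G.card : ℝ) ^ 2 / (2 * (B.card : ℝ)) := by
      field_simp; ring
    linarith
  obtain ⟨b₀, hb₀B, hb₀⟩ := Finset.exists_le_of_sum_le hB hsum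
  refine ⟨F b₀, Finset.filter_subset _ _, ?_, ?_⟩
  · -- size lower bound
    have hk : (0:ℝ) ≤ ((F b₀).card : ℝ) := Nat.cast_nonneg _
    have hbad : (0:ℝ) ≤
        (((A ×ˢ A).filter fun q => ¬ P q ∧ (q.1, b₀) ∈ G ∧ (q.2, b₀) ∈ G).card : ℝ) :=
      Nat.cast_nonneg _
    have hsq : (G.card : ℝ) ^ 2 / (2 * (B.card : ℝ) ^ 2) ≤ ((F b₀).card : ℝ) ^ 2 := by
      have : (0:ℝ) ≤ _ / ε := div_nonneg hbad hε.le
      linarith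
    have h4 : (0:ℝ) ≤ (G.card : ℝ) / (2 * (B.card : ℝ)) := by positivity
    have h5 : ((G.card : ℝ) / (2 * (B.card : ℝ))) ^ 2 ≤ ((F b₀).card : ℝ) ^ 2 := by
      refine le_trans ?_ hsq
      rw [div_pow]
      exact div_le_div_of_nonneg_left (by positivity) (by positivity) (by nlinarith)
    have h6 := (pow_le_pow_iff_left₀ h4 hk two_ne_zero).1 h5
    calc 1 / 2 * (G.card : ℝ) / (B.card : ℝ)
        = (G.card : ℝ) / (2 * (B.card : ℝ)) := by ring
      _ ≤ ((F b₀).card : ℝ) := h6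
  · -- popularity bound
    have hEq : ((F b₀ ×ˢ F b₀).filter fun q => ¬ P q)
        = (A ×ˢ A).filter fun q => ¬ P q ∧ (q.1, b₀) ∈ G ∧ (q.2, b₀) ∈ G := by
      ext q
      simp only [Finset.mem_filter, Finset.mem_product, hFdef]
      tauto
    have hsplit := Finset.card_filter_add_card_filter_not
      (s := F b₀ ×ˢ F b₀) (p := P)
    rw [Finset.card_product, hEq] at hsplit
    have hsplit' : (((F b₀ ×ˢ F b₀).filter P).card : ℝ)
        + (((A ×ˢ A).filter fun q => ¬ P q ∧ (q.1, b₀) ∈ G ∧ (q.2, b₀) ∈ G).card : ℝ)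
        = ((F b₀).card : ℝ) * ((F b₀).card : ℝ) := by exact_mod_cast hsplit
    have hksq : ((F b₀).card : ℝ) ^ 2 = ((F b₀).card : ℝ) * ((F b₀).card : ℝ) := sq _
    have hbadle : (((A ×ˢ A).filter fun q => ¬ P q ∧ (q.1, b₀) ∈ G ∧ (q.2, b₀) ∈ G).card : ℝ)
        ≤ ε * ((F b₀).card : ℝ) ^ 2 := by
      have hpos : (0:ℝ) ≤ (G.card : ℝ) ^ 2 / (2 * (B.card : ℝ) ^ 2) := by positivity
      have h6 : (((A ×ˢ A).filter fun q => ¬ P q ∧ (q.1, b₀) ∈ G ∧ (q.2, b₀) ∈ G).card : ℝ) / ε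
          ≤ ((F b₀).card : ℝ) ^ 2 := by linarith
      rw [div_le_iff₀ hε] at h6
      linarith [mul_comm (((F b₀).card : ℝ) ^ 2) ε]
    calc (1 - ε) * ((F b₀).card : ℝ) ^ 2
        ≤ ((F b₀).card : ℝ) ^ 2
          - (((A ×ˢ A).filter fun q => ¬ P q ∧ (q.1, b₀) ∈ G ∧ (q.2, b₀) ∈ G).card : ℝ) := by
          linarith
      _ ≤ (((F b₀ ×ˢ F b₀).filter P).card : ℝ) := by linarith
end

section
/- Let A, B ⊆ F be finite subsets of a field and G ⊆ A × B nonempty; fix 0 < ε < 1. Then there exist A' ⊆ A and H ⊆ A' × A' with |A'| ≥ c_ε|G|/|B| and |H| ≥ (1−ε)|A'|², such that |A' −_H A'| ≤ C_ε |A −_G B|²|A|²|B| / |G|², where A −_G B = {a−b : (a,b) ∈ G} and A' −_H A' = {a₁−a₂ : (a₁,a₂) ∈ H}. -/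
/-!
Call a pair `(a₁, a₂)` sparse if `a₁, a₂` have fewer than `θ = ε|G|² / (2|B||A|²)` common
neighbours in `B`. Double counting bounds the number of triples `(b, a₁, a₂)` with `a₁, a₂ ∈ N(b)`
and `(a₁, a₂)` sparse by `θ|A|² = ε|G|² / (2|B|)`, while by Cauchy–Schwarz `∑_b |N(b)|² ≥ |G|²/|B|`.
Hence some `b` has `|N(b)| ≥ |G| / (4|B|)` and at most `ε|N(b)|²` sparse pairs in `N(b)²`; take
`A' = N(b)` and `H` its non-sparse pairs. A difference `a₁ - a₂` with `(a₁, a₂) ∈ H` arises from at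
least `θ` pairs `(a₁ - y, a₂ - y) ∈ (A -_G B)²`, and distinct differences give distinct pairs, so
`θ |A' -_H A'| ≤ |A -_G B|²`.
-/

open scoped Classical

open Finset

namespace PartialDifference

variable {α β : Type*}

noncomputable def neighbors (A : Finset α) (G : Finset (α × β)) (b : β) : Finset α :=
  A.filter fun a => (a, b) ∈ G

noncomputable def commonNeighbors (B : Finset β) (G : Finset (α × β)) (p : α × α) : Finset β :=
  B.filter fun y => (p.1, y) ∈ G ∧ (p.2, y) ∈ G

lemma sum_card_neighbors {A : Finset α} {B : Finset β} {G : Finset (α × β)}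
    (hG : G ⊆ A ×ˢ B) : ∑ b ∈ B, #(neighbors A G b) = #G := by
  calc ∑ b ∈ B, #(neighbors A G b) = #((A ×ˢ B).filter (· ∈ G)) := by
        simp only [neighbors, card_filter, sum_product_right]
    _ = #G := by rw [filter_mem_eq_inter, inter_eq_right.2 hG]

lemma sum_card_filter_neighbors_product (A : Finset α) (B : Finset β) (G : Finset (α × β))
    (P : α × α → Prop) :
    ∑ b ∈ B, #((neighbors A G b ×ˢ neighbors A G b).filter P) =
      ∑ p ∈ (A ×ˢ A).filter P, #(commonNeighbors B G p) := by
  symm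
  convert sum_card_bipartiteAbove_eq_sum_card_bipartiteBelow (s := (A ×ˢ A).filter P) (t := B)
    (fun (p : α × α) y => (p.1, y) ∈ G ∧ (p.2, y) ∈ G) using 3 with p _ b
  · rfl
  · ext p
    simp only [bipartiteBelow, neighbors, mem_filter, mem_product]
    tauto

lemma sum_card_filter_commonNeighbors_lt_le (A : Finset α) (B : Finset β) (G : Finset (α × β))
    {θ : ℝ} (hθ : 0 ≤ θ) :
    ∑ b ∈ B, (#((neighbors A G b ×ˢ neighbors A G b).filter
        fun p => #(commonNeighbors B G p) < θ) : ℝ) ≤ θ * #A ^ 2 := by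
  rw [← Nat.cast_sum, sum_card_filter_neighbors_product, Nat.cast_sum]
  calc _ ≤ #((A ×ˢ A).filter fun p => #(commonNeighbors B G p) < θ) • θ :=
        sum_le_card_nsmul _ _ _ fun p hp => (mem_filter.1 hp).2.le
    _ ≤ θ * #A ^ 2 := by
        rw [nsmul_eq_mul, mul_comm, sq, ← Nat.cast_mul, ← card_product]
        gcongr
        exact filter_subset _ _

lemma mul_card_image_sub_le_sq [AddGroup α] (B : Finset α) (G H : Finset (α × α)) {θ : ℝ}
    (hH : ∀ p ∈ H, θ ≤ #(commonNeighbors B G p)) :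
    θ * #(H.image fun p => p.1 - p.2) ≤ (#(G.image fun g => g.1 - g.2) : ℝ) ^ 2 := by
  set D := H.image fun p => p.1 - p.2
  set E := G.image fun g => g.1 - g.2
  choose! rep hrepH hrep using fun d (hd : d ∈ D) => mem_image.1 hd
  have hinj : #(D.sigma fun d => commonNeighbors B G (rep d)) ≤ #(E ×ˢ E) := by
    refine card_le_card_of_injOn (fun q => ((rep q.1).1 - q.2, (rep q.1).2 - q.2)) ?_ ?_
    · rintro ⟨d, y⟩ hq
      simp only [coe_sigma, Set.mem_sigma_iff, mem_coe, commonNeighbors, mem_filter] at hq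
      simp only [coe_product, Set.mem_prod, mem_coe, E, mem_image]
      exact ⟨⟨_, hq.2.2.1, rfl⟩, ⟨_, hq.2.2.2, rfl⟩⟩
    · rintro ⟨d₁, y₁⟩ h₁ ⟨d₂, y₂⟩ h₂ heq
      simp only [coe_sigma, Set.mem_sigma_iff, mem_coe] at h₁ h₂
      simp only [Prod.mk.injEq] at heq
      obtain rfl : d₁ = d₂ := by
        rw [← hrep d₁ h₁.1, ← hrep d₂ h₂.1, ← sub_sub_sub_cancel_right _ _ y₁, heq.1, heq.2,
          sub_sub_sub_cancel_right]
      obtain rfl : y₁ = y₂ := sub_right_injective heq.1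
      rfl
  calc θ * #D = #D • θ := by rw [nsmul_eq_mul, mul_comm]
    _ ≤ ∑ d ∈ D, (#(commonNeighbors B G (rep d)) : ℝ) :=
        card_nsmul_le_sum _ _ _ fun d hd => hH _ (hrepH d hd)
    _ ≤ #E ^ 2 := by
        rw [← Nat.cast_sum, ← card_sigma, sq, ← Nat.cast_mul, ← card_product]
        exact_mod_cast hinj

lemma exists_ge_and_le_mul_sq {ι : Type*} (s : Finset ι) (x y : ι → ℝ) {ε S : ℝ}
    (hε : 0 < ε) (hS : 0 < S) (hx : ∀ i ∈ s, 0 ≤ x i) (hy : ∀ i ∈ s, 0 ≤ y i)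
    (hxS : ∑ i ∈ s, x i = S) (hyS : ∑ i ∈ s, y i ≤ ε * S ^ 2 / (2 * #s)) :
    ∃ i ∈ s, S / (4 * #s) ≤ x i ∧ y i ≤ ε * x i ^ 2 := by
  have hs : (0 : ℝ) < #s := by
    rw [Nat.cast_pos, card_pos]
    exact nonempty_of_sum_ne_zero (hxS.trans_ne hS.ne')
  by_contra! h
  set t := S / (4 * #s)
  have hpoint : ∀ i ∈ s, ε * x i ^ 2 ≤ y i + ε * t * x i := by
    intro i hi
    by_cases hxi : t ≤ x i
    · have : 0 ≤ ε * t * x i := mul_nonneg (by positivity) (hx i hi)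
      linarith [h i hi hxi]
    · have : x i ^ 2 ≤ t * x i := by
        rw [sq]; exact mul_le_mul_of_nonneg_right (not_le.1 hxi).le (hx i hi)
      nlinarith [hy i hi]
  have hCS : S ^ 2 ≤ #s * ∑ i ∈ s, x i ^ 2 := hxS ▸ sq_sum_le_card_mul_sum_sq
  have hsum : ε * ∑ i ∈ s, x i ^ 2 ≤ ε * S ^ 2 / (2 * #s) + ε * t * S := by
    calc ε * ∑ i ∈ s, x i ^ 2 ≤ ∑ i ∈ s, (y i + ε * t * x i) := by
          rw [mul_sum]; exact sum_le_sum hpoint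
      _ ≤ _ := by rw [sum_add_distrib, ← mul_sum, hxS]; gcongr
  have hlower : ε * S ^ 2 / #s ≤ ε * ∑ i ∈ s, x i ^ 2 := by
    rw [mul_div_assoc]; gcongr; rwa [div_le_iff₀' hs]
  have hpos : 0 < ε * S ^ 2 / #s := by positivity
  have ht : ε * t * S = ε * S ^ 2 / #s / 4 := by ring
  have hhalf : ε * S ^ 2 / (2 * #s) = ε * S ^ 2 / #s / 2 := by ring
  linarith

end PartialDifference

open PartialDifference

theorem stmt9_general (ε : ℝ) (hε : 0 < ε) :
    ∃ cε Cε : ℝ, 0 < cε ∧ 0 < Cε ∧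
      ∀ (F : Type) [Field F], ∀ (A B : Finset F) (G : Finset (F × F)),
        G ⊆ A ×ˢ B → G.Nonempty →
        ∃ A' ⊆ A, ∃ H ⊆ A' ×ˢ A',
          cε * (G.card : ℝ) / (B.card : ℝ) ≤ (A'.card : ℝ) ∧
          (1 - ε) * (A'.card : ℝ) ^ 2 ≤ (H.card : ℝ) ∧
          ((H.image fun q => q.1 - q.2).card : ℝ) ≤
            Cε * ((G.image fun g => g.1 - g.2).card : ℝ) ^ 2 * (A.card : ℝ) ^ 2 *
              (B.card : ℝ) / (G.card : ℝ) ^ 2 := by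
  refine ⟨1 / 4, 2 / ε, by norm_num, by positivity, fun F _ A B G hG hGne => ?_⟩
  obtain ⟨⟨a₀, b₀⟩, hg₀⟩ := hGne
  have hA : (0 : ℝ) < #A := by exact_mod_cast card_pos.2 ⟨a₀, (mem_product.1 (hG hg₀)).1⟩
  have hB : (0 : ℝ) < #B := by exact_mod_cast card_pos.2 ⟨b₀, (mem_product.1 (hG hg₀)).2⟩
  have hGpos : (0 : ℝ) < #G := by exact_mod_cast card_pos.2 ⟨_, hg₀⟩
  set θ : ℝ := ε * #G ^ 2 / (2 * #B * #A ^ 2) with hθ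
  set N := neighbors A G
  set sparse := fun b => (N b ×ˢ N b).filter fun p => #(commonNeighbors B G p) < θ
  obtain ⟨b, -, hlarge, hsparse⟩ := exists_ge_and_le_mul_sq B (fun b => (#(N b) : ℝ))
    (fun b => (#(sparse b) : ℝ)) hε hGpos (fun _ _ => Nat.cast_nonneg _)
    (fun _ _ => Nat.cast_nonneg _) (by exact_mod_cast sum_card_neighbors hG)
    ((sum_card_filter_commonNeighbors_lt_le A B G (by positivity)).trans_eq
      (by rw [hθ]; field_simp))
  set H := (N b ×ˢ N b).filter fun p => θ ≤ #(commonNeighbors B G p)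
  refine ⟨N b, filter_subset _ _, H, filter_subset _ _, ?_, ?_, ?_⟩
  · calc 1 / 4 * (#G : ℝ) / #B = #G / (4 * #B) := by ring
      _ ≤ #(N b) := hlarge
  · have hsplit := card_filter_add_card_filter_not (s := N b ×ˢ N b)
      fun p => (#(commonNeighbors B G p) : ℝ) < θ
    simp_rw [not_lt, card_product, ← sq] at hsplit
    have : (#(sparse b) : ℝ) + #H = #(N b) ^ 2 := by exact_mod_cast hsplit
    linarith
  · calc _ ≤ (#(G.image fun g => g.1 - g.2) : ℝ) ^ 2 / θ := by
          rw [le_div_iff₀' (by positivity)]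
          exact mul_card_image_sub_le_sq B G H fun p hp => (mem_filter.1 hp).2
      _ = _ := by rw [hθ]; field_simp

theorem stmt9 (ε : ℝ) (hε : 0 < ε) (hε1 : ε < 1) :
    ∃ cε Cε : ℝ, 0 < cε ∧ 0 < Cε ∧
      ∀ (F : Type) [Field F], ∀ (A B : Finset F) (G : Finset (F × F)),
        G ⊆ A ×ˢ B → G.Nonempty →
        ∃ A' ⊆ A, ∃ H ⊆ A' ×ˢ A',
          cε * (G.card : ℝ) / (B.card : ℝ) ≤ (A'.card : ℝ) ∧
          (1 - ε) * (A'.card : ℝ) ^ 2 ≤ (H.card : ℝ) ∧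
          ((H.image fun q => q.1 - q.2).card : ℝ) ≤
            Cε * ((G.image fun g => g.1 - g.2).card : ℝ) ^ 2 * (A.card : ℝ) ^ 2 *
              (B.card : ℝ) / (G.card : ℝ) ^ 2 :=
  stmt9_general ε hε
end

section
/- Let 0 < ε < 1/4 and let A be a finite subset of an abelian group with G ⊆ A × A satisfying |G| ≥ (1−ε)|A|². Then there exists A' ⊆ A with |A'| ≥ (1−2√ε)|A| such that |A' − A'| ≤ C_ε |A −_G A|² / |A|, where A −_G A = {a₁ − a₂ : (a₁,a₂) ∈ G}. -/
/-!
Keep the vertices `a` of degree more than `(1 - √ε)|A|`; Markov's inequality applied to the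
missing degrees `|A| - deg a`, which sum to at most `ε|A|²`, shows that at most `√ε|A|` vertices
are discarded. Two kept vertices `a, a'` have more than `(1 - 2√ε)|A|` common neighbours `b`,
and each of them writes `a - a' = (a - b) - (a' - b)` as a difference of two elements of
`A -_G A`. Since `A -_G A` has only `|A -_G A|²` ordered pairs, double counting gives
`|A' - A'| (1 - 2√ε)|A| ≤ |A -_G A|²`.
-/

open scoped Classical

open Finset

section Graph

variable {α β : Type*}

noncomputable def nbhd (G : Finset (α × β)) (B : Finset β) (a : α) : Finset β :=
  {b ∈ B | (a, b) ∈ G}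

variable {G : Finset (α × β)} {A : Finset α} {B : Finset β}

lemma card_nbhd_le (G : Finset (α × β)) (B : Finset β) (a : α) : #(nbhd G B a) ≤ #B :=
  card_filter_le _ _

lemma sum_card_nbhd (hG : G ⊆ A ×ˢ B) : ∑ a ∈ A, #(nbhd G B a) = #G := by
  calc ∑ a ∈ A, #(nbhd G B a)
      = ∑ p ∈ A ×ˢ B, if p ∈ G then 1 else 0 := by
        simp only [nbhd, card_filter, sum_product]
    _ = #{p ∈ A ×ˢ B | p ∈ G} := (card_filter _ _).symm
    _ = #G := by rw [filter_mem_eq_inter, inter_eq_right.2 hG]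

lemma card_filter_card_nbhd_le_mul (hG : G ⊆ A ×ˢ B) (t : ℝ) :
    #{a ∈ A | (#(nbhd G B a) : ℝ) ≤ #B - t} * t ≤ #A * #B - #G := by
  calc #{a ∈ A | (#(nbhd G B a) : ℝ) ≤ #B - t} * t
      = ∑ _a ∈ A with (#(nbhd G B _a) : ℝ) ≤ #B - t, t := by rw [sum_const, nsmul_eq_mul]
    _ ≤ ∑ a ∈ A with (#(nbhd G B a) : ℝ) ≤ #B - t, ((#B : ℝ) - #(nbhd G B a)) :=
        sum_le_sum fun a ha => by linarith [(mem_filter.1 ha).2]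
    _ ≤ ∑ a ∈ A, ((#B : ℝ) - #(nbhd G B a)) :=
        sum_le_sum_of_subset_of_nonneg (filter_subset _ _) fun a _ _ =>
          sub_nonneg.2 (by exact_mod_cast card_nbhd_le G B a)
    _ = #A * #B - #G := by
        rw [sum_sub_distrib, sum_const, nsmul_eq_mul, ← Nat.cast_sum, sum_card_nbhd hG]

lemma mul_card_le_card_filter_lt_card_nbhd (hG : G ⊆ A ×ˢ B) {s : ℝ} (hs : 0 < s)
    (hB : 0 < #B) (hdense : (1 - s ^ 2) * #A * #B ≤ #G) :
    (1 - s) * #A ≤ #{a ∈ A | (#B : ℝ) - s * #B < #(nbhd G B a)} := by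
  have hmarkov := card_filter_card_nbhd_le_mul hG (s * #B)
  have hsplit := card_filter_add_card_filter_not (s := A)
    (fun a => (#B : ℝ) - s * #B < #(nbhd G B a))
  simp only [not_lt] at hsplit
  have hsB : 0 < s * #B := by positivity
  have hbad : (#{a ∈ A | (#(nbhd G B a) : ℝ) ≤ #B - s * #B} : ℝ) ≤ s * #A :=
    le_of_mul_le_mul_right (by nlinarith) hsB
  have hsplitR : (#{a ∈ A | (#B : ℝ) - s * #B < #(nbhd G B a)} : ℝ)
      + #{a ∈ A | (#(nbhd G B a) : ℝ) ≤ #B - s * #B} = #A := by exact_mod_cast hsplit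
  linarith

lemma card_nbhd_add_card_nbhd_sub_le_card_inter (G : Finset (α × β)) (B : Finset β) (a a' : α) :
    (#(nbhd G B a) : ℝ) + #(nbhd G B a') - #B ≤ #(nbhd G B a ∩ nbhd G B a') := by
  have hunion : #(nbhd G B a ∪ nbhd G B a') ≤ #B :=
    card_le_card (union_subset (filter_subset _ _) (filter_subset _ _))
  rw [cast_card_inter]
  gcongr

end Graph

section Differences

variable {α : Type*} [AddGroup α]

/-- The restricted difference set `A -_G A = {a₁ - a₂ : (a₁, a₂) ∈ G}`; for `G = A ×ˢ A` it is
the full difference set `A - A`. -/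
noncomputable def graphDiff (G : Finset (α × α)) : Finset α := G.image fun g => g.1 - g.2

lemma card_mul_le_card_sq_of_le_card_repr {E D : Finset α} {k : ℝ}
    (h : ∀ x ∈ E, k ≤ #{p ∈ D ×ˢ D | p.1 - p.2 = x}) : #E * k ≤ #D ^ 2 := by
  have hcount := card_nsmul_le_card_nsmul (fun x (p : α × α) => p.1 - p.2 = x) (n := (1 : ℝ)) h
    fun p _ => by
      exact_mod_cast card_le_one.2 fun x hx y hy => by
        rw [mem_bipartiteBelow] at hx hy
        exact hx.2.symm.trans hy.2
  simpa [nsmul_eq_mul, card_product, sq] using hcount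

lemma card_inter_nbhd_le_card_repr (G : Finset (α × α)) (B : Finset α) (a a' : α) :
    #(nbhd G B a ∩ nbhd G B a') ≤
      #{p ∈ graphDiff G ×ˢ graphDiff G | p.1 - p.2 = a - a'} := by
  refine card_le_card_of_injOn (fun b => (a - b, a' - b)) (fun b hb => ?_)
    fun b₁ _ b₂ _ h => sub_right_injective (congrArg Prod.fst h)
  simp only [coe_inter, Set.mem_inter_iff, mem_coe, nbhd, mem_filter] at hb
  simp only [coe_filter, Set.mem_ofPred_eq, mem_product, graphDiff, mem_image]
  exact ⟨⟨⟨_, hb.1.2, rfl⟩, ⟨_, hb.2.2, rfl⟩⟩, sub_sub_sub_cancel_right a a' b⟩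

lemma card_graphDiff_mul_le {G : Finset (α × α)} {A' B : Finset α} {k : ℝ}
    (hk : ∀ a ∈ A', ∀ a' ∈ A', k ≤ #(nbhd G B a ∩ nbhd G B a')) :
    #(graphDiff (A' ×ˢ A')) * k ≤ #(graphDiff G) ^ 2 := by
  refine card_mul_le_card_sq_of_le_card_repr fun x hx => ?_
  obtain ⟨⟨a, a'⟩, haa', rfl⟩ := mem_image.1 hx
  obtain ⟨ha, ha'⟩ := mem_product.1 haa'
  exact (hk a ha a' ha').trans (by exact_mod_cast card_inter_nbhd_le_card_repr G B a a')

end Differences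

theorem stmt12 (ε : ℝ) (hε : 0 < ε) (hε4 : ε < 1 / 4) :
    ∃ Cε : ℝ, 0 < Cε ∧
      ∀ (α : Type) [AddCommGroup α],
        ∀ (A : Finset α) (G : Finset (α × α)),
          G ⊆ A ×ˢ A →
          (1 - ε) * (A.card : ℝ) ^ 2 ≤ (G.card : ℝ) →
          ∃ A' ⊆ A,
            (1 - 2 * Real.sqrt ε) * (A.card : ℝ) ≤ (A'.card : ℝ) ∧
            (((A' ×ˢ A').image fun q => q.1 - q.2).card : ℝ) ≤
              Cε * ((G.image fun g => g.1 - g.2).card : ℝ) ^ 2 / (A.card : ℝ) := by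
  set s := Real.sqrt ε
  have hs : 0 < s := Real.sqrt_pos.2 hε
  have hs2 : s ^ 2 = ε := Real.sq_sqrt hε.le
  have h2s : 0 < 1 - 2 * s := by nlinarith
  refine ⟨1 / (1 - 2 * s), by positivity, fun α _ A G hGA hG => ?_⟩
  obtain rfl | hA := A.eq_empty_or_nonempty
  · exact ⟨∅, by simp⟩
  have hn : (0 : ℝ) < #A := by exact_mod_cast hA.card_pos
  set A' := {a ∈ A | (#A : ℝ) - s * #A < #(nbhd G A a)}
  have hA' : (1 - s) * #A ≤ #A' :=
    mul_card_le_card_filter_lt_card_nbhd hGA hs hA.card_pos (by rw [hs2]; nlinarith)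
  have hcommon : ∀ a ∈ A', ∀ a' ∈ A', (1 - 2 * s) * #A ≤ #(nbhd G A a ∩ nbhd G A a') :=
    fun a ha a' ha' => by
      linarith [(mem_filter.1 ha).2, (mem_filter.1 ha').2,
        card_nbhd_add_card_nbhd_sub_le_card_inter G A a a']
  have hdiff := card_graphDiff_mul_le hcommon
  refine ⟨A', filter_subset _ _, by nlinarith, ?_⟩
  rw [le_div_iff₀ hn, one_div_mul_eq_div, le_div_iff₀ h2s]
  unfold graphDiff at hdiff
  linarith
end
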